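/- arXiv:1906.06209 — 8 statements merged into one kernel-verified Lean document; each statement's English description precedes it below -/
import Mathlib

section
/- Let α ∈ [3π/4, π] and z = e^{iα}. Define x : (Fin 2 → Fin 3) → ℝ by: x(L) = 1 if L = (0,0), (1,1) or (2,2); x(L) = −cos α if L = (0,1), (1,0), (1,2) or (2,1); and x(L) = cos 2α if L = (0,2) or (2,0). Then x has all entries nonnegative, x ≠ 0, and A_α^{⊗2} x = 0, i.e., for every J : Fin 2 → Fin 2 one has ∑_{L : Fin 2 → Fin 3} x(L) · (A_α)_{J(0),L(0)} · (A_α)_{J(1),L(1)} = 0. -/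
open Complex Real

/-- The matrix `A_α` with rows `(1, e^{iα}, 0)` and `(0, 1, e^{iα})`. -/
noncomputable def Amat (α : ℝ) : Matrix (Fin 2) (Fin 3) ℂ :=
  !![1, Complex.exp (α * Complex.I), 0;
     0, 1, Complex.exp (α * Complex.I)]

/-- The table of values of the explicit solution for `N = 2`. -/
noncomputable def vmat (α : ℝ) : Matrix (Fin 3) (Fin 3) ℝ :=
  !![1,              -Real.cos α,  Real.cos (2 * α);
     -Real.cos α,    1,            -Real.cos α;
     Real.cos (2 * α), -Real.cos α, 1]

lemma key_quad (α : ℝ) :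
    (Complex.exp (α * Complex.I))^2 - 2*(Real.cos α : ℂ)*Complex.exp (α * Complex.I) + 1 = 0 := by
  have h1 : (Real.cos α : ℂ) = Complex.cos α := by rw [Complex.ofReal_cos]
  have h2 : Complex.cos (α : ℂ) = (Complex.exp (α * Complex.I) + Complex.exp (-(α * Complex.I)))/2 := by
    rw [Complex.cos]; ring_nf
  have h3 := Complex.exp_neg ((α:ℂ) * Complex.I)
  have h4 := Complex.exp_ne_zero ((α:ℂ) * Complex.I)
  rw [h3] at h2
  field_simp at h2
  rw [h1]; linear_combination -h2


/-- For `α ∈ [3π/4, π]` the vector `x(L) = vmat α (L 0) (L 1)` is a nontrivial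
nonnegative solution of `A_α^{⊗2} x = 0`. -/
theorem explicit_nns_N2 (α : ℝ) (hα : α ∈ Set.Icc (3 * π / 4) π) :
    (∀ L : Fin 2 → Fin 3, 0 ≤ vmat α (L 0) (L 1)) ∧
    (fun L : Fin 2 → Fin 3 => vmat α (L 0) (L 1)) ≠ 0 ∧
    (∀ J : Fin 2 → Fin 2,
      ∑ L : Fin 2 → Fin 3,
        (vmat α (L 0) (L 1) : ℂ) * ∏ p : Fin 2, Amat α (J p) (L p) = 0) := by
  obtain ⟨hα1, hα2⟩ := hα
  have hπ := Real.pi_pos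
  refine ⟨?_, ?_, ?_⟩
  · intro L
    have hc : Real.cos α ≤ 0 :=
      Real.cos_nonpos_of_pi_div_two_le_of_le (by linarith) (by linarith)
    have hc2 : 0 ≤ Real.cos (2*α) := by
      rw [show (2*α) = (2*α - 2*π) + 2*π by ring, Real.cos_add_two_pi]
      exact Real.cos_nonneg_of_mem_Icc ⟨by linarith, by linarith⟩
    obtain ⟨a, ha⟩ : ∃ a, L 0 = a := ⟨_, rfl⟩
    obtain ⟨b, hb⟩ : ∃ b, L 1 = b := ⟨_, rfl⟩
    rw [ha, hb]
    fin_cases a <;> fin_cases b <;> simp [vmat] <;> linarith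
  · intro h
    have := congrFun h ![0, 0]
    simp [vmat] at this
  · intro J
    have hz := key_quad α
    have hc2 : Real.cos (2*α) = 2 * Real.cos α^2 - 1 := Real.cos_two_mul α
    rw [← Equiv.sum_comp (piFinTwoEquiv fun _ => Fin 3).symm, Fintype.sum_prod_type]
    obtain ⟨j0, hj0⟩ : ∃ j, J 0 = j := ⟨_, rfl⟩
    obtain ⟨j1, hj1⟩ : ∃ j, J 1 = j := ⟨_, rfl⟩
    simp only [piFinTwoEquiv_symm_apply, Fin.prod_univ_two, Matrix.cons_val_zero,
      Matrix.cons_val_one, Matrix.head_cons, hj0, hj1]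
    fin_cases j0 <;> fin_cases j1 <;>
      simp [Fin.sum_univ_three, Amat, vmat, hc2] <;> push_cast [Complex.ofReal_cos] at hz ⊢ <;>
      first
        | linear_combination hz
        | linear_combination (-(Complex.cos (α:ℂ))) * hz
end

section
/- Let α ∈ ℝ and N ≥ 1. If there exists x : (Fin N → Fin 3) → ℝ with all entries nonnegative, x ≠ 0, and A_α^{⊗N} x = 0, then there exists x̂ : (Fin N → Fin 3) → ℝ with all entries nonnegative, x̂ ≠ 0, A_α^{⊗N} x̂ = 0, and such that x̂(L ∘ σ) = x̂(L) for every L : Fin N → Fin 3 and every permutation σ of Fin N (equivalently, x̂(L) depends only on how many coordinates of L equal 0, 1 and 2). -/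
open Complex Finset

/-- If `A_α^{⊗N} x = 0` has a nontrivial nonnegative solution, then it has one
which is invariant under permutations of the coordinates of the labels. -/
theorem symmetric_nns (α : ℝ) (N : ℕ) (hN : 1 ≤ N)
    (x : (Fin N → Fin 3) → ℝ) (hx0 : ∀ L, 0 ≤ x L) (hxne : x ≠ 0)
    (hx : ∀ J : Fin N → Fin 2,
      ∑ L : Fin N → Fin 3, (x L : ℂ) * ∏ p : Fin N, Amat α (J p) (L p) = 0) :
    ∃ xh : (Fin N → Fin 3) → ℝ,
      (∀ L, 0 ≤ xh L) ∧ xh ≠ 0 ∧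
      (∀ J : Fin N → Fin 2,
        ∑ L : Fin N → Fin 3, (xh L : ℂ) * ∏ p : Fin N, Amat α (J p) (L p) = 0) ∧
      (∀ (L : Fin N → Fin 3) (σ : Equiv.Perm (Fin N)), xh (L ∘ σ) = xh L) := by
  refine ⟨fun L => ∑ σ : Equiv.Perm (Fin N), x (L ∘ σ), ?_, ?_, ?_, ?_⟩
  · intro L
    exact Finset.sum_nonneg fun σ _ => hx0 _
  · -- nonzero
    obtain ⟨L, hL⟩ : ∃ L, x L ≠ 0 := by
      by_contra h
      push_neg at h
      exact hxne (funext h)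
    intro h
    have h1 := congrFun h L
    simp only [Pi.zero_apply] at h1
    have hle : x (L ∘ ⇑(1 : Equiv.Perm (Fin N)))
        ≤ ∑ σ : Equiv.Perm (Fin N), x (L ∘ σ) :=
      Finset.single_le_sum (f := fun σ : Equiv.Perm (Fin N) => x (L ∘ σ))
        (fun σ _ => hx0 _) (Finset.mem_univ 1)
    have : L ∘ ⇑(1 : Equiv.Perm (Fin N)) = L := by
      funext p; simp
    rw [this, h1] at hle
    exact hL (le_antisymm hle (hx0 L))
  · intro J
    have key : ∀ σ : Equiv.Perm (Fin N),
        ∑ L : Fin N → Fin 3, (x (L ∘ σ) : ℂ) * ∏ p : Fin N, Amat α (J p) (L p) = 0 := by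
      intro σ
      have h2 := hx (J ∘ σ)
      rw [← h2]
      apply Fintype.sum_equiv (Equiv.arrowCongr σ.symm (Equiv.refl (Fin 3)))
      intro L
      have hcomp : (Equiv.arrowCongr σ.symm (Equiv.refl (Fin 3))) L = L ∘ σ := by
        funext p; simp [Equiv.arrowCongr]
      rw [hcomp]
      congr 1
      exact (Equiv.prod_comp σ (fun p => Amat α (J p) (L p))).symm
    calc ∑ L : Fin N → Fin 3,
          ((∑ σ : Equiv.Perm (Fin N), x (L ∘ σ) : ℝ) : ℂ) * ∏ p : Fin N, Amat α (J p) (L p)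
        = ∑ L : Fin N → Fin 3, ∑ σ : Equiv.Perm (Fin N),
            (x (L ∘ σ) : ℂ) * ∏ p : Fin N, Amat α (J p) (L p) := by
          refine Finset.sum_congr rfl fun L _ => ?_
          push_cast
          rw [Finset.sum_mul]
      _ = ∑ σ : Equiv.Perm (Fin N), ∑ L : Fin N → Fin 3,
            (x (L ∘ σ) : ℂ) * ∏ p : Fin N, Amat α (J p) (L p) := Finset.sum_comm
      _ = 0 := by simp [key]
  · intro L σ
    apply Fintype.sum_equiv (Equiv.mulLeft σ)
    intro τ
    have : L ∘ ⇑(σ * τ) = (L ∘ ⇑σ) ∘ ⇑τ := by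
      funext p; simp
    rw [Equiv.coe_mulLeft, this]
end

section
/- Let α ∈ ℝ, z = e^{iα}, N ≥ 1, and let 0 ≤ j ≤ N. Let J : Fin N → Fin 2 be given by J(p) = 0 for p < N−j and J(p) = 1 for p ≥ N−j. Then for every triple (N0,N1,N2) of nonnegative integers with N0+N1+N2 = N, ∑_{L ∈ [N0,N1,N2]} ∏_{p<N} (A'_α)_{J(p),L(p)} = binom(N−j, N0) · (−z²)^{N−j−N0} · binom(j, N1) · z^{j−N1} when N0 ≤ N−j and N1 ≤ j, and equals 0 otherwise. -/
open Complex Finset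

/-- The matrix `A'_α` with rows `(1, 0, -e^{2iα})` and `(0, 1, e^{iα})`. -/
noncomputable def Amat' (α : ℝ) : Matrix (Fin 2) (Fin 3) ℂ :=
  !![1, 0, -Complex.exp (α * Complex.I) ^ 2;
     0, 1, Complex.exp (α * Complex.I)]

/-- The number of coordinates of `L` equal to `i`. -/
def cnt {N : ℕ} (L : Fin N → Fin 3) (i : Fin 3) : ℕ :=
  (Finset.univ.filter fun p => L p = i).card

lemma fin3_cases (k : Fin 3) : k = 0 ∨ k = 1 ∨ k = 2 := by
  fin_cases k <;> simp

lemma cnt_sum {N : ℕ} (L : Fin N → Fin 3) : cnt L 0 + cnt L 1 + cnt L 2 = N := by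
  have h := Finset.card_eq_sum_card_fiberwise (s := (univ : Finset (Fin N)))
    (t := (univ : Finset (Fin 3))) (f := L) (fun x _ => Finset.mem_univ (L x))
  simp only [Fin.sum_univ_three, Finset.card_univ, Fintype.card_fin] at h
  simp only [cnt]
  omega

/-- Explicit formula for the entries of `B_{α,N}` in the row labelled by the
binary word `0…0 1…1` with `j` ones. -/
theorem B_entry_formula (α : ℝ) (N j : ℕ) (hN : 1 ≤ N) (hj : j ≤ N)
    (N0 N1 N2 : ℕ) (hsum : N0 + N1 + N2 = N)
    (J : Fin N → Fin 2) (hJ : ∀ p : Fin N, J p = if (p : ℕ) < N - j then 0 else 1) :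
    ∑ L ∈ Finset.univ.filter
        (fun L : Fin N → Fin 3 => cnt L 0 = N0 ∧ cnt L 1 = N1 ∧ cnt L 2 = N2),
      ∏ p : Fin N, Amat' α (J p) (L p) =
    if N0 ≤ N - j ∧ N1 ≤ j then
      ((N - j).choose N0 : ℂ) * (-Complex.exp (α * Complex.I) ^ 2) ^ (N - j - N0) *
        (j.choose N1 : ℂ) * Complex.exp (α * Complex.I) ^ (j - N1)
    else 0 := by
  classical
  set z : ℂ := Complex.exp (α * Complex.I) with hz
  set m : ℕ := N - j with hm
  have hmN : m ≤ N := Nat.sub_le _ _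
  have hzne : z ≠ 0 := Complex.exp_ne_zero _
  have hz2ne : -z ^ 2 ≠ 0 := by
    simpa using pow_ne_zero 2 hzne
  have hA0 : ∀ k : Fin 3, Amat' α 0 k = if k = 0 then 1 else if k = 1 then 0 else -z ^ 2 := by
    intro k; fin_cases k <;> simp [Amat', hz]
  have hA1 : ∀ k : Fin 3, Amat' α 1 k = if k = 0 then 0 else if k = 1 then 1 else z := by
    intro k; fin_cases k <;> simp [Amat', hz]
  set P : (Fin N → Fin 3) → Prop :=
    fun L => cnt L 0 = N0 ∧ cnt L 1 = N1 ∧ cnt L 2 = N2 with hP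
  set Good : (Fin N → Fin 3) → Prop := fun L => ∀ p : Fin N, Amat' α (J p) (L p) ≠ 0
    with hGood
  have hGood1 : ∀ L, Good L → ∀ p : Fin N, (p : ℕ) < m → L p ≠ 1 := by
    intro L hg p hp h1
    apply hg p
    rw [hJ p, if_pos hp, hA0, h1]
    simp
  have hGood2 : ∀ L, Good L → ∀ p : Fin N, ¬ (p : ℕ) < m → L p ≠ 0 := by
    intro L hg p hp h0
    apply hg p
    rw [hJ p, if_neg hp, hA1, h0]
    simp
  set B1 : Finset (Fin N) := univ.filter (fun p : Fin N => (p : ℕ) < m) with hB1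
  set B2 : Finset (Fin N) := univ.filter (fun p : Fin N => ¬ (p : ℕ) < m) with hB2
  have cB1 : B1.card = m := by
    have : B1 = (Finset.range m).attachFin
        (fun x hx => lt_of_lt_of_le (Finset.mem_range.1 hx) hmN) := by
      ext p; simp [hB1]
    rw [this, Finset.card_attachFin, Finset.card_range]
  have cB2 : B2.card = j := by
    have h := Finset.card_filter_add_card_filter_not
      (s := (univ : Finset (Fin N))) (p := fun p : Fin N => (p : ℕ) < m)
    rw [← hB1, ← hB2] at h
    simp only [Finset.card_univ, Fintype.card_fin] at h
    rw [cB1] at h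
    omega
  -- Step 1 : restrict the sum to good L's
  have step1 : ∑ L ∈ univ.filter (fun L : Fin N → Fin 3 => P L),
        ∏ p : Fin N, Amat' α (J p) (L p)
      = ∑ L ∈ univ.filter (fun L : Fin N → Fin 3 => P L ∧ Good L),
        ∏ p : Fin N, Amat' α (J p) (L p) := by
    refine (Finset.sum_subset ?_ ?_).symm
    · intro L hL
      simp only [Finset.mem_filter, Finset.mem_univ, true_and] at hL ⊢
      exact hL.1
    · intro L hL hL2
      simp only [Finset.mem_filter, Finset.mem_univ, true_and] at hL hL2
      have hng : ¬ Good L := fun hg => hL2 ⟨hL, hg⟩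
      simp only [hGood, not_forall, not_not] at hng
      obtain ⟨p, hp⟩ := hng
      exact Finset.prod_eq_zero (Finset.mem_univ p) hp
  -- Step 2 : the product is constant on good L's
  have step2 : ∀ L : Fin N → Fin 3, P L → Good L →
      ∏ p : Fin N, Amat' α (J p) (L p) = (-z ^ 2) ^ (m - N0) * z ^ (j - N1) := by
    intro L hPL hGL
    have h1 : ∀ p : Fin N, Amat' α (J p) (L p)
        = if (p : ℕ) < m then (if L p = 0 then 1 else -z ^ 2)
          else (if L p = 1 then 1 else z) := by
      intro p
      by_cases hp : (p : ℕ) < m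
      · rw [hJ p, if_pos hp, if_pos hp, hA0]
        rcases fin3_cases (L p) with h | h | h
        · simp [h]
        · exact absurd h (hGood1 L hGL p hp)
        · simp [h]
      · rw [hJ p, if_neg hp, if_neg hp, hA1]
        rcases fin3_cases (L p) with h | h | h
        · exact absurd h (hGood2 L hGL p hp)
        · simp [h]
        · simp [h]
    have e1 : B1.filter (fun p => L p = 0) = univ.filter (fun p => L p = 0) := by
      ext q
      simp only [hB1, Finset.filter_filter, Finset.mem_filter, Finset.mem_univ, true_and]
      exact ⟨fun h => h.2, fun h => ⟨by by_contra hc; exact hGood2 L hGL q hc h, h⟩⟩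
    have e2 : B2.filter (fun p => L p = 1) = univ.filter (fun p => L p = 1) := by
      ext q
      simp only [hB2, Finset.filter_filter, Finset.mem_filter, Finset.mem_univ, true_and]
      exact ⟨fun h => h.2, fun h => ⟨fun hc => hGood1 L hGL q hc h, h⟩⟩
    have c1 : (B1.filter (fun p => ¬ L p = 0)).card = m - N0 := by
      have h := Finset.card_filter_add_card_filter_not
        (s := B1) (p := fun p => L p = 0)
      rw [e1] at h
      have h0 : (univ.filter (fun p => L p = 0)).card = N0 := hPL.1
      omega
    have c2 : (B2.filter (fun p => ¬ L p = 1)).card = j - N1 := by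
      have h := Finset.card_filter_add_card_filter_not
        (s := B2) (p := fun p => L p = 1)
      rw [e2] at h
      have h0 : (univ.filter (fun p => L p = 1)).card = N1 := hPL.2.1
      omega
    rw [Finset.prod_congr rfl (fun p _ => h1 p)]
    rw [Finset.prod_ite]
    rw [← hB1, ← hB2]
    rw [Finset.prod_ite, Finset.prod_ite, Finset.prod_const, Finset.prod_const,
      Finset.prod_const, Finset.prod_const, c1, c2]
    ring
  -- Step 3 : count the good L's
  have cardT : (univ.filter (fun L : Fin N → Fin 3 => P L ∧ Good L)).card
      = m.choose N0 * j.choose N1 := by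
    have hbij : (univ.filter (fun L : Fin N → Fin 3 => P L ∧ Good L)).card
        = ((B1.powersetCard N0) ×ˢ (B2.powersetCard N1)).card := by
      refine Finset.card_bij'
        (fun L _ => (univ.filter (fun p => L p = 0), univ.filter (fun p => L p = 1)))
        (fun S _ => fun p => if p ∈ S.1 then 0 else if p ∈ S.2 then 1 else 2)
        ?_ ?_ ?_ ?_
      · -- hi
        intro L hL
        simp only [Finset.mem_filter, Finset.mem_univ, true_and] at hL
        obtain ⟨hPL, hGL⟩ := hL
        simp only [Finset.mem_product, Finset.mem_powersetCard]
        refine ⟨⟨?_, hPL.1⟩, ?_, hPL.2.1⟩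
        · intro q hq
          simp only [Finset.mem_filter, Finset.mem_univ, true_and] at hq
          simp only [hB1, Finset.mem_filter, Finset.mem_univ, true_and]
          by_contra hc; exact hGood2 L hGL q hc hq
        · intro q hq
          simp only [Finset.mem_filter, Finset.mem_univ, true_and] at hq
          simp only [hB2, Finset.mem_filter, Finset.mem_univ, true_and]
          intro hc; exact hGood1 L hGL q hc hq
      · -- hj
        rintro ⟨S, T⟩ hST
        simp only [Finset.mem_product, Finset.mem_powersetCard] at hST
        obtain ⟨⟨hS1, hS2⟩, hT1, hT2⟩ := hST
        have hSm : ∀ q ∈ S, (q : ℕ) < m := by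
          intro q hq
          have := hS1 hq
          simpa [hB1] using this
        have hTm : ∀ q ∈ T, ¬ (q : ℕ) < m := by
          intro q hq
          have := hT1 hq
          simpa [hB2] using this
        set L' : Fin N → Fin 3 := fun p => if p ∈ S then 0 else if p ∈ T then 1 else 2
          with hL'
        have f0 : univ.filter (fun p => L' p = 0) = S := by
          ext q
          by_cases hqS : q ∈ S <;> by_cases hqT : q ∈ T <;>
            simp [hL', hqS, hqT]
        have f1 : univ.filter (fun p => L' p = 1) = T := by
          ext q
          by_cases hqS : q ∈ S
          · have hqT : q ∉ T := fun h => (hTm q h) (hSm q hqS)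
            simp [hL', hqS, hqT]
          · by_cases hqT : q ∈ T <;> simp [hL', hqS, hqT]
        simp only [Finset.mem_filter, Finset.mem_univ, true_and]
        constructor
        · refine ⟨?_, ?_, ?_⟩
          · show (univ.filter (fun p => L' p = 0)).card = N0
            rw [f0]; exact hS2
          · show (univ.filter (fun p => L' p = 1)).card = N1
            rw [f1]; exact hT2
          · show cnt L' 2 = N2
            have hs := cnt_sum L'
            have e0 : cnt L' 0 = N0 := by
              show (univ.filter (fun p => L' p = 0)).card = N0
              rw [f0]; exact hS2
            have e1 : cnt L' 1 = N1 := by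
              show (univ.filter (fun p => L' p = 1)).card = N1
              rw [f1]; exact hT2
            omega
        · intro p
          by_cases hp : (p : ℕ) < m
          · rw [hJ p, if_pos hp, hA0]
            by_cases hqS : p ∈ S
            · simp [hL', hqS]
            · have hqT : p ∉ T := fun h => (hTm p h) hp
              simp [hL', hqS, hqT, hz2ne]
          · rw [hJ p, if_neg hp, hA1]
            have hqS : p ∉ S := fun h => hp (hSm p h)
            by_cases hqT : p ∈ T
            · simp [hL', hqS, hqT]
            · simp [hL', hqS, hqT, hzne]
      · -- left_inv
        intro L hL
        funext p
        rcases fin3_cases (L p) with h | h | h <;> simp [Finset.mem_filter, h]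
      · -- right_inv
        rintro ⟨S, T⟩ hST
        simp only [Finset.mem_product, Finset.mem_powersetCard] at hST
        obtain ⟨⟨hS1, _⟩, hT1, _⟩ := hST
        have hSm : ∀ q ∈ S, (q : ℕ) < m := by
          intro q hq; have := hS1 hq; simpa [hB1] using this
        have hTm : ∀ q ∈ T, ¬ (q : ℕ) < m := by
          intro q hq; have := hT1 hq; simpa [hB2] using this
        refine Prod.ext ?_ ?_
        · ext q
          by_cases hqS : q ∈ S <;> by_cases hqT : q ∈ T <;>
            simp [hqS, hqT]
        · ext q
          by_cases hqS : q ∈ S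
          · have hqT : q ∉ T := fun h => (hTm q h) (hSm q hqS)
            simp [hqS, hqT]
          · by_cases hqT : q ∈ T <;> simp [hqS, hqT]
    rw [hbij, Finset.card_product, Finset.card_powersetCard, Finset.card_powersetCard,
      cB1, cB2]
  -- Assemble
  rw [step1, Finset.sum_congr rfl (fun L hL => by
      simp only [Finset.mem_filter, Finset.mem_univ, true_and] at hL
      exact step2 L hL.1 hL.2),
    Finset.sum_const, cardT]
  by_cases hc : N0 ≤ m ∧ N1 ≤ j
  · rw [if_pos hc]
    push_cast [nsmul_eq_mul]
    ring
  · rw [if_neg hc]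
    rcases not_and_or.1 hc with h | h
    · rw [Nat.choose_eq_zero_of_lt (show m < N0 by omega)]
      simp
    · rw [Nat.choose_eq_zero_of_lt (show j < N1 by omega)]
      simp
end

section
/- Let α ∈ ℝ, z = e^{iα}, and N ≥ 1. The N+1 columns of B_{α,N} indexed by the triples (N0, N1, N2) with N1 = 0 (i.e., the columns labelled [N,0,0], [N−1,0,1], …, [0,0,N]) are linearly independent over ℂ. -/
open Complex Finset

lemma card_filter_lt_val (N i : ℕ) (hi : i ≤ N) :
    ((Finset.univ : Finset (Fin N)).filter fun p : Fin N => (p:ℕ) < i).card = i := by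
  have himg : (((Finset.univ : Finset (Fin N)).filter fun p : Fin N => (p:ℕ) < i).image
      Fin.val) = Finset.range i := by
    ext x
    simp only [Finset.mem_image, Finset.mem_filter, Finset.mem_univ, true_and,
      Finset.mem_range]
    constructor
    · rintro ⟨p, hp, rfl⟩; exact hp
    · intro hx; exact ⟨⟨x, lt_of_lt_of_le hx hi⟩, hx, rfl⟩
  rw [← Finset.card_image_of_injective _ Fin.val_injective, himg, Finset.card_range]

lemma cnt_one_eq_zero {N : ℕ} {L : Fin N → Fin 3} (h : cnt L 1 = 0) (p : Fin N) :
    L p ≠ 1 := by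
  have := Finset.card_eq_zero.mp h
  intro hp
  have : p ∈ (Finset.univ.filter fun q => L q = (1 : Fin 3)) := by
    simp [hp]
  simp [Finset.card_eq_zero.mp h] at this

/-- If `L` avoids `1`, has exactly `i` twos, and is not `2` exactly on `{p < i}`,
then some position `q` with `q < i` has `L q = 0`. -/
lemma exists_coord_zero_lt {N i : ℕ} (hi : i ≤ N) {L : Fin N → Fin 3}
    (h1 : cnt L 1 = 0) (h2 : cnt L 2 ≤ i)
    (hne : ∃ q : Fin N, (q:ℕ) < i ∧ L q ≠ 2) :
    ∃ q : Fin N, (q:ℕ) < i ∧ L q = 0 := by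
  obtain ⟨q, hq, hq2⟩ := hne
  exact ⟨q, hq, by have := cnt_one_eq_zero h1 q; omega⟩

lemma prod_zero_of_zero_lt {N : ℕ} (α : ℝ) (i : ℕ) {L : Fin N → Fin 3}
    (h : ∃ q : Fin N, (q:ℕ) < i ∧ L q = 0) :
    (∏ p : Fin N, Amat' α (if (p:ℕ) < i then 1 else 0) (L p)) = 0 := by
  obtain ⟨q, hq, hq0⟩ := h
  apply Finset.prod_eq_zero (Finset.mem_univ q)
  rw [if_pos hq, hq0]
  simp [Amat']

/-- Vanishing below the diagonal. -/
lemma col_vanish {N : ℕ} (α : ℝ) {j i : ℕ} (hj : j < i) (hi : i ≤ N) :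
    ∑ L ∈ Finset.univ.filter
        (fun L : Fin N → Fin 3 =>
          cnt L 0 = N - j ∧ cnt L 1 = 0 ∧ cnt L 2 = j),
      ∏ p : Fin N, Amat' α (if (p:ℕ) < i then 1 else 0) (L p) = 0 := by
  apply Finset.sum_eq_zero
  intro L hL
  rw [Finset.mem_filter] at hL
  obtain ⟨-, h0, h1, h2⟩ := hL
  apply prod_zero_of_zero_lt
  apply exists_coord_zero_lt hi h1 (le_of_eq h2 |>.trans hj.le)
  by_contra hcon
  push_neg at hcon
  have hsub : ((Finset.univ : Finset (Fin N)).filter fun p : Fin N => (p:ℕ) < i)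
      ⊆ (Finset.univ.filter fun p => L p = 2) := by
    intro p hp
    rw [Finset.mem_filter] at hp ⊢
    exact ⟨hp.1, hcon p hp.2⟩
  have := Finset.card_le_card hsub
  rw [card_filter_lt_val N i hi] at this
  unfold cnt at h2
  omega

/-- Diagonal value. -/
lemma col_diag {N : ℕ} (α : ℝ) {i : ℕ} (hi : i ≤ N) :
    ∑ L ∈ Finset.univ.filter
        (fun L : Fin N → Fin 3 =>
          cnt L 0 = N - i ∧ cnt L 1 = 0 ∧ cnt L 2 = i),
      ∏ p : Fin N, Amat' α (if (p:ℕ) < i then 1 else 0) (L p)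
      = Complex.exp (α * Complex.I) ^ i := by
  set Lstar : Fin N → Fin 3 := fun p => if (p:ℕ) < i then 2 else 0 with hLs
  have hfilt2 : (Finset.univ.filter fun p => Lstar p = 2)
      = (Finset.univ.filter fun p : Fin N => (p:ℕ) < i) := by
    apply Finset.filter_congr
    intro p _
    by_cases h : (p:ℕ) < i <;> simp [Lstar, h]
  have hfilt0 : (Finset.univ.filter fun p => Lstar p = 0)
      = (Finset.univ.filter fun p : Fin N => ¬ (p:ℕ) < i) := by
    apply Finset.filter_congr
    intro p _
    by_cases h : (p:ℕ) < i <;> simp [Lstar, h]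
  have hcard2 : cnt Lstar 2 = i := by
    rw [cnt, hfilt2, card_filter_lt_val N i hi]
  have hcard0 : cnt Lstar 0 = N - i := by
    rw [cnt, hfilt0, Finset.filter_not, Finset.card_sdiff_of_subset (Finset.filter_subset _ _),
      card_filter_lt_val N i hi, Finset.card_univ, Fintype.card_fin]
  have hcard1 : cnt Lstar 1 = 0 := by
    rw [cnt, Finset.card_eq_zero, Finset.filter_eq_empty_iff]
    intro p _
    by_cases h : (p:ℕ) < i <;> simp [Lstar, h]
  have hmem : Lstar ∈ Finset.univ.filter
      (fun L : Fin N → Fin 3 => cnt L 0 = N - i ∧ cnt L 1 = 0 ∧ cnt L 2 = i) := by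
    simp [hcard0, hcard1, hcard2]
  rw [Finset.sum_eq_single_of_mem Lstar hmem]
  · -- product at Lstar
    have : ∀ p : Fin N, Amat' α (if (p:ℕ) < i then 1 else 0) (Lstar p)
        = if (p:ℕ) < i then Complex.exp (α * Complex.I) else 1 := by
      intro p
      by_cases h : (p:ℕ) < i <;> simp [Lstar, h, Amat']
    rw [Finset.prod_congr rfl (fun p _ => this p), Finset.prod_ite, Finset.prod_const,
      Finset.prod_const, one_pow, mul_one, card_filter_lt_val N i hi]
  · intro L hL hLne
    rw [Finset.mem_filter] at hL
    obtain ⟨-, h0, h1, h2⟩ := hL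
    apply prod_zero_of_zero_lt
    apply exists_coord_zero_lt hi h1 h2.le
    by_contra hcon
    push_neg at hcon
    -- then L = Lstar
    apply hLne
    have hsub : ((Finset.univ : Finset (Fin N)).filter fun p : Fin N => (p:ℕ) < i)
        ⊆ (Finset.univ.filter fun p => L p = 2) := by
      intro p hp
      rw [Finset.mem_filter] at hp ⊢
      exact ⟨hp.1, hcon p hp.2⟩
    have heq : (Finset.univ.filter fun p => L p = 2)
        = ((Finset.univ : Finset (Fin N)).filter fun p : Fin N => (p:ℕ) < i) := by
      symm
      apply Finset.eq_of_subset_of_card_le hsub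
      rw [card_filter_lt_val N i hi]
      exact le_of_eq h2
    funext p
    by_cases h : (p:ℕ) < i
    · have : p ∈ (Finset.univ.filter fun p => L p = 2) := by
        rw [heq, Finset.mem_filter]; exact ⟨Finset.mem_univ _, h⟩
      rw [Finset.mem_filter] at this
      simp [Lstar, h, this.2]
    · have : p ∉ (Finset.univ.filter fun p => L p = 2) := by
        rw [heq, Finset.mem_filter]; simp [h]
      rw [Finset.mem_filter] at this
      simp only [Finset.mem_univ, true_and] at this
      have hne1 := cnt_one_eq_zero h1 p
      have : L p = 0 := by omega
      simp [Lstar, h, this]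

/-- The columns of `B_{α,N}` labelled by the triples `[N,0,0], [N-1,0,1], …,
[0,0,N]` (i.e. those with `N1 = 0`) are linearly independent over `ℂ`. -/
theorem B_first_columns_linearIndependent (α : ℝ) (N : ℕ) (hN : 1 ≤ N) :
    LinearIndependent ℂ
      (fun i : Fin (N + 1) => fun J : Fin N → Fin 2 =>
        ∑ L ∈ Finset.univ.filter
            (fun L : Fin N → Fin 3 =>
              cnt L 0 = N - (i : ℕ) ∧ cnt L 1 = 0 ∧ cnt L 2 = (i : ℕ)),
          ∏ p : Fin N, Amat' α (J p) (L p)) := by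
  rw [Fintype.linearIndependent_iff]
  intro g hg
  have hz : Complex.exp (α * Complex.I) ≠ 0 := Complex.exp_ne_zero _
  have key : ∀ i : Fin (N + 1), (∀ j, i < j → g j = 0) → g i = 0 := by
    intro i hind
    have h := congrFun hg (fun p : Fin N => if (p:ℕ) < (i:ℕ) then 1 else 0)
    simp only [Finset.sum_apply, Pi.smul_apply, smul_eq_mul, Pi.zero_apply] at h
    rw [Finset.sum_eq_single i] at h
    · rw [col_diag α (by omega : (i:ℕ) ≤ N)] at h
      exact (mul_eq_zero.mp h).resolve_right (pow_ne_zero _ hz)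
    · intro j _ hji
      rcases lt_or_gt_of_ne hji with hlt | hgt
      · rw [col_vanish α (by exact hlt) (by omega : (i:ℕ) ≤ N), mul_zero]
      · rw [hind j hgt, zero_mul]
    · intro h'; exact absurd (Finset.mem_univ i) h'
  have main : ∀ d, ∀ i : Fin (N + 1), N - (i:ℕ) ≤ d → g i = 0 := by
    intro d
    induction d with
    | zero =>
      intro i hi
      exact key i fun j hj => absurd (Fin.lt_iff_val_lt_val.mp hj)
        (by have := j.isLt; omega)
    | succ d ih =>
      intro i hi
      exact key i fun j hj =>
        ih j (by have := Fin.lt_iff_val_lt_val.mp hj; have := j.isLt; omega)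
  intro i
  exact main N i (by omega)
end

section
/- Let N ≥ 1 and α ∈ [π/2, π]. If there exists a real vector y, indexed by the triples (N0,N1,N2) of nonnegative integers with N0+N1+N2 = N, with all entries nonnegative and y ≠ 0, such that C_{α,N} y = 0 (i.e., for every j ∈ {0,…,N}, ∑_{(N0,N1,N2)} C_{α,N}(j,(N0,N1,N2)) · y(N0,N1,N2) = 0), then α ∈ [π/2 + π/(2N), π]. -/
open Complex Real Finset

/-- Triples `(N0, N1, N2)` of nonnegative integers with `N0 + N1 + N2 = N`. -/
def Triple (N : ℕ) : Type := {t : ℕ × ℕ × ℕ // t.1 + t.2.1 + t.2.2 = N}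

noncomputable instance (N : ℕ) : Fintype (Triple N) :=
  Fintype.ofInjective
    (fun t : Triple N =>
      ((⟨t.1.1, by have := t.2; omega⟩ : Fin (N + 1)),
       (⟨t.1.2.1, by have := t.2; omega⟩ : Fin (N + 1)),
       (⟨t.1.2.2, by have := t.2; omega⟩ : Fin (N + 1))))
    (by
      rintro ⟨⟨a, b, c⟩, h⟩ ⟨⟨a', b', c'⟩, h'⟩ heq
      simp only [Prod.mk.injEq, Fin.mk.injEq] at heq
      exact Subtype.ext (by simp only [Prod.mk.injEq]; exact ⟨heq.1, heq.2.1, heq.2.2⟩))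

/-- The entries of the reduced matrix `C_{α,N}`. -/
noncomputable def Cmat (α : ℝ) (N : ℕ) (j : Fin (N + 1)) (t : Triple N) : ℂ :=
  if t.1.1 ≤ N - (j : ℕ) ∧ t.1.2.1 ≤ (j : ℕ) then
    ((N - (j : ℕ)).choose t.1.1 : ℂ) *
      (-Complex.exp (α * Complex.I) ^ 2) ^ (N - (j : ℕ) - t.1.1) *
      ((j : ℕ).choose t.1.2.1 : ℂ) *
      Complex.exp (α * Complex.I) ^ ((j : ℕ) - t.1.2.1)
  else 0

/-!
Weighting row `j` of `C_{α,N}` by `binom(N, j) R^(N-j)` collapses column `(N0, N1, N2)` to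
`binom(N, N1) binom(N - N1, N0) R^N0 μ^N2` with `μ = z - R z²`, by the binomial theorem.
If `α < π/2 + π/(2N)`, the direction `-z²` of the ray `R ↦ z - R z²` has argument
`2α - π < π/N`, so some `R > 0` makes `μ = s e^(iθ)` with `s > 0` and `0 ≤ θ < π/N`.
Rotated by `e^(-iNθ/2)`, every collapsed column then lies in the open right half-plane,
so a nonnegative `y` annihilated by all rows is zero.
-/

theorem Nat.choose_mul_choose_mul_choose {a b c k : ℕ} (hk : k ≤ c) :
    (a + b + c).choose (b + k) * (b + k).choose b * (a + (c - k)).choose a =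
      (a + b + c).choose b * (a + c).choose a * c.choose k := by
  rw [show a + (c - k) = a + c - k by omega, Nat.choose_mul (Nat.le_add_right b k), mul_assoc,
    mul_assoc, show a + b + c - b = a + c by omega, Nat.add_sub_cancel_left,
    ← Nat.choose_symm (show k ≤ a + c by omega), Nat.choose_mul (show a ≤ a + c - k by omega),
    ← Nat.choose_symm (show a + c - k - a ≤ a + c - a by omega)]
  congr 3 <;> omega

def reducedEntry {K : Type*} [CommRing K] (z : K) (N j N0 N1 : ℕ) : K :=
  (N - j).choose N0 * (-z ^ 2) ^ (N - j - N0) * j.choose N1 * z ^ (j - N1)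

theorem sum_choose_mul_pow_mul_reducedEntry {K : Type*} [CommRing K] (z R : K)
    {N0 N1 N2 N : ℕ} (hN : N0 + N1 + N2 = N) :
    ∑ j ∈ range (N + 1), (N.choose j : K) * R ^ (N - j) * reducedEntry z N j N0 N1 =
      N.choose N1 * (N - N1).choose N0 * R ^ N0 * (z - R * z ^ 2) ^ N2 := by
  subst hN
  rw [show N0 + N1 + N2 - N1 = N0 + N2 by omega]
  set f : ℕ → K := fun j =>
    ((N0 + N1 + N2).choose j : K) * R ^ (N0 + N1 + N2 - j) * reducedEntry z (N0 + N1 + N2) j N0 N1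
  have below : ∀ j ∈ range N1, f j = 0 := fun j hj => by
    simp [f, reducedEntry, Nat.choose_eq_zero_of_lt (mem_range.mp hj)]
  have above : ∀ i ∈ range N0, f (N1 + (N2 + 1 + i)) = 0 := fun i hi => by
    have hlt : N0 + N1 + N2 - (N1 + (N2 + 1 + i)) < N0 := by have := mem_range.mp hi; omega
    simp [f, reducedEntry, Nat.choose_eq_zero_of_lt hlt]
  rw [show N0 + N1 + N2 + 1 = N1 + (N2 + 1 + N0) by omega, sum_range_add, sum_eq_zero below,
    zero_add, sum_range_add, sum_eq_zero above, add_zero, sub_eq_add_neg, add_pow, mul_sum]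
  refine sum_congr rfl fun k hk => ?_
  have hk : k ≤ N2 := Nat.lt_succ_iff.mp (mem_range.mp hk)
  have hchoose := congrArg (Nat.cast (R := K))
    (Nat.choose_mul_choose_mul_choose (a := N0) (b := N1) hk)
  push_cast at hchoose
  simp only [reducedEntry]
  rw [show N0 + N1 + N2 - (N1 + k) = N0 + (N2 - k) by omega, Nat.add_sub_cancel_left,
    Nat.add_sub_cancel_left, pow_add, show -(R * z ^ 2) = R * -z ^ 2 by ring, mul_pow]
  linear_combination (R ^ N0 * R ^ (N2 - k) * (-z ^ 2) ^ (N2 - k) * z ^ k) * hchoose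

theorem Cmat_eq_reducedEntry (α : ℝ) (N : ℕ) (j : Fin (N + 1)) (t : Triple N) :
    Cmat α N j t = reducedEntry (cexp (α * I)) N j t.1.1 t.1.2.1 := by
  unfold Cmat reducedEntry
  split_ifs with h
  · rfl
  · rcases not_and_or.mp h with h | h <;> simp [Nat.choose_eq_zero_of_lt (not_le.mp h)]

theorem sum_choose_mul_pow_mul_Cmat (α : ℝ) (N : ℕ) (R : ℂ) (t : Triple N) :
    ∑ j : Fin (N + 1), N.choose j * R ^ (N - j) * Cmat α N j t =
      N.choose t.1.2.1 * (N - t.1.2.1).choose t.1.1 * R ^ t.1.1 *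
        (cexp (α * I) - R * cexp (α * I) ^ 2) ^ t.1.2.2 := by
  simp only [Cmat_eq_reducedEntry]
  exact (Fin.sum_univ_eq_sum_range (fun j => N.choose j * R ^ (N - j) *
    reducedEntry (cexp (α * I)) N j t.1.1 t.1.2.1) (N + 1)).trans
    (sum_choose_mul_pow_mul_reducedEntry _ _ t.2)

-- Law of sines in the triangle with vertices `0`, `e^(iα)` and `e^(iθ) sin α / sin (2α - θ)`.
theorem exp_mul_I_sub_mul_exp_mul_I_sq (α θ : ℝ) (h : Real.sin (2 * α - θ) ≠ 0) :
    cexp (α * I) - ↑(Real.sin (α - θ) / Real.sin (2 * α - θ)) * cexp (α * I) ^ 2 =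
      ↑(Real.sin α / Real.sin (2 * α - θ)) * cexp (θ * I) := by
  have h' : Complex.sin (2 * α - θ) ≠ 0 := by exact_mod_cast h
  push_cast
  rw [div_mul_eq_mul_div, div_mul_eq_mul_div, sub_div' h', div_left_inj' h']
  simp only [Complex.sin.eq_1, neg_mul, two_mul, sub_mul, add_mul, Complex.exp_neg,
    Complex.exp_sub, Complex.exp_add]
  field_simp
  ring

theorem exists_pos_exp_mul_I_sub_mul_sq_eq {α θ : ℝ} (hα : 0 < α) (hθα : θ < α)
    (hθ : 2 * α - π < θ) :
    ∃ R s : ℝ, 0 < R ∧ 0 < s ∧ cexp (α * I) - R * cexp (α * I) ^ 2 = s * cexp (θ * I) := by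
  have hsin : 0 < Real.sin (2 * α - θ) := Real.sin_pos_of_pos_of_lt_pi (by linarith) (by linarith)
  exact ⟨_, _, div_pos (Real.sin_pos_of_pos_of_lt_pi (by linarith) (by linarith)) hsin,
    div_pos (Real.sin_pos_of_pos_of_lt_pi hα (by linarith)) hsin,
    exp_mul_I_sub_mul_exp_mul_I_sq α θ hsin.ne'⟩

theorem eq_zero_of_sum_mul_eq_zero_of_re_pos {ι : Type*} [Fintype ι] {w : ι → ℂ} {y : ι → ℝ}
    (hw : ∀ t, 0 < (w t).re) (hy : ∀ t, 0 ≤ y t) (h : ∑ t, w t * y t = 0) : y = 0 := by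
  have hre : ∑ t, (w t).re * y t = 0 := by simpa [re_sum] using congrArg re h
  funext t
  have hterm := (sum_eq_zero_iff_of_nonneg fun t _ => mul_nonneg (hw t).le (hy t)).mp hre t
    (mem_univ t)
  exact (mul_eq_zero.mp hterm).resolve_left (hw t).ne'

theorem eq_zero_of_sum_mul_exp_pow_eq_zero {ι : Type*} [Fintype ι] {r y : ι → ℝ} {n : ι → ℕ}
    {N : ℕ} {θ : ℝ} (hr : ∀ t, 0 < r t) (hn : ∀ t, n t ≤ N) (hθ : 0 ≤ θ) (hNθ : N * θ < π)
    (hy : ∀ t, 0 ≤ y t) (h : ∑ t, r t * cexp (θ * I) ^ n t * y t = 0) : y = 0 := by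
  refine eq_zero_of_sum_mul_eq_zero_of_re_pos
    (w := fun t => cexp (-(N * θ / 2 : ℝ) * I) * (r t * cexp (θ * I) ^ n t)) (fun t => ?_) hy ?_
  · have hrot : cexp (-(N * θ / 2 : ℝ) * I) * (r t * cexp (θ * I) ^ n t) =
        r t * cexp ((n t * θ - N * θ / 2 : ℝ) * I) := by
      rw [← Complex.exp_nat_mul, mul_left_comm, ← Complex.exp_add]
      push_cast
      ring_nf
    have hnt : (n t : ℝ) ≤ N := by exact_mod_cast hn t
    have hcos : 0 < Real.cos (n t * θ - N * θ / 2) :=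
      Real.cos_pos_of_mem_Ioo ⟨by nlinarith, by nlinarith⟩
    simpa only [hrot, re_ofReal_mul, exp_ofReal_mul_I_re] using mul_pos (hr t) hcos
  · simp only [mul_assoc] at h ⊢
    rw [← mul_sum, h, mul_zero]

/-- Necessity: if the reduced system `C_{α,N} y = 0` has a nontrivial
nonnegative solution with `α ∈ [π/2, π]`, then `α ∈ [π/2 + π/(2N), π]`. -/
theorem C_nns_necessity (N : ℕ) (hN : 1 ≤ N) (α : ℝ)
    (hα : α ∈ Set.Icc (π / 2) π) (y : Triple N → ℝ)
    (hy0 : ∀ t, 0 ≤ y t) (hyne : y ≠ 0)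
    (hy : ∀ j : Fin (N + 1), ∑ t : Triple N, Cmat α N j t * (y t : ℂ) = 0) :
    α ∈ Set.Icc (π / 2 + π / (2 * N)) π := by
  obtain ⟨hα1, hα2⟩ := hα
  refine ⟨le_of_not_gt fun hlt => hyne ?_, hα2⟩
  have hN' : (1 : ℝ) ≤ N := by exact_mod_cast hN
  have hπN : 2 * α - π < π / N := by
    rw [show π / (2 * N) = π / N / 2 by ring] at hlt
    linarith
  have hπNπ : π / N ≤ π := div_le_self pi_pos.le hN'
  obtain ⟨θ, hθlo, hθhi⟩ : ∃ θ, 2 * α - π < θ ∧ θ < min α (π / N) :=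
    exists_between (lt_min (by linarith) hπN)
  have hNθ : N * θ < π := (lt_div_iff₀' (by linarith)).mp (hθhi.trans_le (min_le_right _ _))
  obtain ⟨R, s, hR, hs, hμ⟩ :=
    exists_pos_exp_mul_I_sub_mul_sq_eq (by linarith) (hθhi.trans_le (min_le_left _ _)) hθlo
  have hcomb : ∀ w : Fin (N + 1) → ℂ, ∑ t, (∑ j, w j * Cmat α N j t) * y t = 0 := fun w => by
    simp only [sum_mul, mul_assoc]
    rw [sum_comm]
    simp only [← mul_sum, hy, mul_zero, sum_const_zero]
  have hsum : ∑ t : Triple N, ((N.choose t.1.2.1 * (N - t.1.2.1).choose t.1.1 * R ^ t.1.1 *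
      s ^ t.1.2.2 : ℝ) : ℂ) * cexp (θ * I) ^ t.1.2.2 * y t = 0 := by
    rw [← hcomb fun j => N.choose j * (R : ℂ) ^ (N - j)]
    refine sum_congr rfl fun t _ => ?_
    rw [sum_choose_mul_pow_mul_Cmat, hμ]
    push_cast
    ring
  refine eq_zero_of_sum_mul_exp_pow_eq_zero (fun t => ?_) (fun t => ?_) (by linarith) hNθ hy0 hsum
  · have ht := t.2
    have : 0 < N.choose t.1.2.1 := Nat.choose_pos (by omega)
    have : 0 < (N - t.1.2.1).choose t.1.1 := Nat.choose_pos (by omega)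
    positivity
  · have ht := t.2
    omega
end

section
/- Let α ∈ ℝ and N ≥ 1. There exists x : (Fin N → Fin 3) → ℝ with all entries nonnegative, x ≠ 0, and A_α^{⊗N} x = 0, if and only if there exists a real vector y indexed by the triples (N0,N1,N2) of nonnegative integers with N0+N1+N2 = N, with all entries nonnegative and y ≠ 0, such that C_{α,N} y = 0. -/
open Complex Finset

/-!
The map `A_α^{⊗N}` commutes with permutations of the `N` tensor factors, so averaging a
nonnegative solution over the symmetric group gives one that depends only on the letter counts
`(N₀, N₁, N₂)` of `L`. For `x = y ∘ (counts)`, the `J`-th equation depends only on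
`j = #{p | J p = 1}`: it says that `y` annihilates the coefficients of `Y^N₀ X^N₁` in
`(Y + zX)^(N-j) (X + z)^j`, while row `j` of `C_{α,N}` lists the same coefficients of
`(Y - z²)^(N-j) (X + z)^j`. As `Y + zX = (Y - z²) + z (X + z)`, the binomial theorem writes each
family of polynomials as a triangular combination of the other, so both systems have the same
solutions `y`.
-/

section FiberCard

variable {ι κ : Type*} [Fintype ι] [DecidableEq κ]

def fiberCard (f : ι → κ) (k : κ) : ℕ := #{i | f i = k}

lemma fiberCard_le (f : ι → κ) (k : κ) : fiberCard f k ≤ Fintype.card ι :=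
  card_filter_le _ _

lemma sum_fiberCard [Fintype κ] (f : ι → κ) : ∑ k, fiberCard f k = Fintype.card ι :=
  (card_eq_sum_card_fiberwise fun _ _ => mem_univ _).symm

lemma prod_comp_eq_prod_pow_fiberCard [Fintype κ] {M : Type*} [CommMonoid M]
    (f : ι → κ) (h : κ → M) : ∏ i, h (f i) = ∏ k, h k ^ fiberCard f k := by
  rw [← Fintype.prod_fiberwise' f h]
  simp [fiberCard, Fintype.card_subtype]

lemma exists_perm_comp_eq_of_fiberCard_eq {f g : ι → κ} (h : fiberCard f = fiberCard g) :
    ∃ σ : Equiv.Perm ι, g ∘ σ = f :=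
  ⟨Equiv.ofFiberEquiv fun k => Fintype.equivOfCardEq <| by
      simpa [Fintype.card_subtype, fiberCard] using congrFun h k,
    funext <| Equiv.ofFiberEquiv_map _⟩

lemma exists_fiberCard_eq [Fintype κ] {N : ℕ} (c : κ → ℕ) (hc : ∑ k, c k = N) :
    ∃ f : Fin N → κ, fiberCard f = c := by
  let e : Fin N ≃ Σ k, Fin (c k) := Fintype.equivOfCardEq (by simp [hc])
  refine ⟨fun i => (e i).1, funext fun k => ?_⟩
  rw [fiberCard, ← Fintype.card_subtype, ← Fintype.card_fin (c k)]
  exact Fintype.card_congr ((e.subtypeEquiv fun _ => Iff.rfl).trans (Equiv.sigmaSubtype k))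

end FiberCard

section Symmetrization

variable {ι κ m R M : Type*} [Fintype ι] [DecidableEq ι]

def tensorPowMulVec [Fintype κ] [CommSemiring R] (A : m → κ → R) (x : (ι → κ) → R)
    (J : ι → m) : R :=
  ∑ L, x L * ∏ p, A (J p) (L p)

def symmetrize [AddCommMonoid M] (x : (ι → κ) → M) (L : ι → κ) : M :=
  ∑ σ : Equiv.Perm ι, x (L ∘ σ)

lemma symmetrize_comp_perm [AddCommMonoid M] (x : (ι → κ) → M) (L : ι → κ)
    (τ : Equiv.Perm ι) : symmetrize x (L ∘ τ) = symmetrize x L :=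
  Fintype.sum_equiv (Equiv.mulLeft τ) _ _ fun _ => rfl

variable [Fintype κ] [CommSemiring R] (A : m → κ → R) (x : (ι → κ) → R)

lemma tensorPowMulVec_comp_perm (σ : Equiv.Perm ι) (J : ι → m) :
    tensorPowMulVec A (fun L => x (L ∘ σ)) J = tensorPowMulVec A x (J ∘ σ) :=
  Fintype.sum_equiv (σ.symm.arrowCongr (Equiv.refl κ)) _ _ fun L => by
    simp [← Equiv.prod_comp σ fun p => A (J p) (L p)]; rfl

lemma tensorPowMulVec_symmetrize (J : ι → m) :
    tensorPowMulVec A (symmetrize x) J = ∑ σ : Equiv.Perm ι, tensorPowMulVec A x (J ∘ σ) := by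
  simp only [← tensorPowMulVec_comp_perm]
  simp only [tensorPowMulVec, symmetrize, sum_mul]
  exact Finset.sum_comm

end Symmetrization

section Triple

variable {N : ℕ}

lemma Triple.ext_of_fst_fst {s t : Triple N} (h0 : s.1.1 = t.1.1) (h1 : s.1.2.1 = t.1.2.1) :
    s = t := by
  have hs := s.2
  have ht := t.2
  exact Subtype.ext (Prod.ext h0 (Prod.ext h1 (by omega)))

def tripleOf (L : Fin N → Fin 3) : Triple N :=
  ⟨(fiberCard L 0, fiberCard L 1, fiberCard L 2), by
    simpa [Fin.sum_univ_three, add_assoc] using sum_fiberCard L⟩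

lemma tripleOf_surjective : Function.Surjective (tripleOf (N := N)) := by
  intro t
  obtain ⟨L, hL⟩ := exists_fiberCard_eq ![t.1.1, t.1.2.1, t.1.2.2] (by
    simpa [Fin.sum_univ_three, add_assoc] using t.2)
  exact ⟨L, Triple.ext_of_fst_fst (by simp [tripleOf, hL]) (by simp [tripleOf, hL])⟩

lemma apply_eq_of_tripleOf_eq {M : Type*} {x : (Fin N → Fin 3) → M}
    (hx : ∀ (L : Fin N → Fin 3) (σ : Equiv.Perm (Fin N)), x (L ∘ σ) = x L)
    {L L' : Fin N → Fin 3} (h : tripleOf L = tripleOf L') : x L = x L' := by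
  obtain ⟨h0, h1, h2⟩ : fiberCard L 0 = fiberCard L' 0 ∧ fiberCard L 1 = fiberCard L' 1 ∧
      fiberCard L 2 = fiberCard L' 2 := by simpa [tripleOf] using congrArg Subtype.val h
  have hcard : fiberCard L' = fiberCard L := by
    funext i
    fin_cases i <;> simp [h0, h1, h2]
  obtain ⟨σ, rfl⟩ := exists_perm_comp_eq_of_fiberCard_eq hcard
  exact (hx L σ).symm

lemma exists_nonneg_solution_comp_tripleOf {m : Type*} (A : m → Fin 3 → ℂ)
    (x : (Fin N → Fin 3) → ℝ) (hx0 : ∀ L, 0 ≤ x L) (hx : x ≠ 0)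
    (hsys : ∀ J, tensorPowMulVec A (fun L => (x L : ℂ)) J = 0) :
    ∃ y : Triple N → ℝ, (∀ t, 0 ≤ y t) ∧ y ≠ 0 ∧
      ∀ J, tensorPowMulVec A (fun L => (y (tripleOf L) : ℂ)) J = 0 := by
  set xs := symmetrize x
  set y := xs ∘ Function.surjInv tripleOf_surjective
  have hy : ∀ L, y (tripleOf L) = xs L := fun L =>
    apply_eq_of_tripleOf_eq (symmetrize_comp_perm x) (Function.surjInv_eq _ _)
  have hle : ∀ L, x L ≤ xs L := fun L =>
    single_le_sum (f := fun σ : Equiv.Perm (Fin N) => x (L ∘ σ)) (fun σ _ => hx0 _) (mem_univ 1)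
  refine ⟨y, fun t => sum_nonneg fun σ _ => hx0 _,
    fun hy0 => hx (funext fun L => le_antisymm ((hle L).trans_eq ?_) (hx0 L)), fun J => ?_⟩
  · rw [← hy, hy0, Pi.zero_apply, Pi.zero_apply]
  · have hcast : (fun L => ((xs L : ℝ) : ℂ)) = symmetrize fun L => (x L : ℂ) := by
      funext L
      simp [xs, symmetrize]
    simp only [hy, hcast, tensorPowMulVec_symmetrize, hsys, sum_const_zero]

end Triple

section Triangular

variable {K A M : Type*} [CommRing K] [CommRing A] [Algebra K A] [AddCommGroup M] [Module K M]

/-- The binomial theorem writes `(w + c • u) ^ (N - j) * u ^ j` as a combination of the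
`w ^ (N - i) * u ^ i` with `j ≤ i ≤ N`. -/
lemma map_add_smul_pow_mul_pow_eq_zero (φ : A →ₗ[K] M) {w u : A} (c : K) {N : ℕ}
    (h : ∀ i ≤ N, φ (w ^ (N - i) * u ^ i) = 0) {j : ℕ} (hj : j ≤ N) :
    φ ((w + c • u) ^ (N - j) * u ^ j) = 0 := by
  rw [add_comm, add_pow, sum_mul, map_sum]
  refine sum_eq_zero fun k hk => ?_
  have hk : k ≤ N - j := Nat.lt_succ_iff.1 (mem_range.1 hk)
  have hterm : (c • u) ^ k * w ^ (N - j - k) * ((N - j).choose k : A) * u ^ j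
      = (c ^ k * (N - j).choose k) • (w ^ (N - (j + k)) * u ^ (j + k)) := by
    rw [Nat.sub_sub, Algebra.smul_def, Algebra.smul_def, map_mul, map_pow, map_natCast, pow_add]
    ring
  rw [hterm, map_smul, h _ (by omega), smul_zero]

lemma forall_map_add_smul_pow_mul_pow_eq_zero_iff (φ : A →ₗ[K] M) (w u : A) (c : K) (N : ℕ) :
    (∀ j ≤ N, φ ((w + c • u) ^ (N - j) * u ^ j) = 0) ↔ ∀ j ≤ N, φ (w ^ (N - j) * u ^ j) = 0 :=
  ⟨fun h j hj => by simpa using map_add_smul_pow_mul_pow_eq_zero φ (-c) h hj,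
    fun h _ => map_add_smul_pow_mul_pow_eq_zero φ c h⟩

end Triangular

section Bivariate

open Polynomial
open scoped Polynomial.Bivariate

variable {R : Type*} [CommRing R] {N : ℕ}

/-- Pairs `y` with the coefficients of `Y ^ N₀ * X ^ N₁` for `(N₀, N₁, N₂) : Triple N`. -/
noncomputable def triplePairing (y : Triple N → R) : R[X][Y] →ₗ[R] R :=
  ∑ t, y t • (lcoeff R t.1.2.1 ∘ₗ (lcoeff R[X] t.1.1).restrictScalars R)

lemma triplePairing_apply (y : Triple N → R) (P : R[X][Y]) :
    triplePairing y P = ∑ t, y t * (P.coeff t.1.1).coeff t.1.2.1 := by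
  simp [triplePairing]

lemma triplePairing_monomial (y : Triple N → R) (s : Triple N) :
    triplePairing y (C (X ^ s.1.2.1) * Y ^ s.1.1) = y s := by
  rw [triplePairing_apply, sum_eq_single s]
  · rw [coeff_C_mul_X_pow, if_pos rfl, coeff_X_pow, if_pos rfl, mul_one]
  · intro t _ hts
    rw [coeff_C_mul_X_pow]
    split_ifs with h0
    · rw [coeff_X_pow, if_neg fun h1 => hts (Triple.ext_of_fst_fst h0 h1), mul_zero]
    · rw [coeff_zero, mul_zero]
  · simp

lemma coeff_coeff_Y_add_CC_pow_mul (r s : R) (n j a b : ℕ) :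
    (((Y + C (C r)) ^ n * C (X + C s) ^ j).coeff a).coeff b
      = n.choose a * r ^ (n - a) * (j.choose b * s ^ (j - b)) := by
  rw [← map_pow, coeff_mul_C, coeff_X_add_C_pow, ← map_pow, ← map_natCast C, ← map_mul,
    coeff_C_mul, coeff_X_add_C_pow]
  ring

lemma sum_cmat_mul_eq_triplePairing (α : ℝ) (y : Triple N → ℂ) (j : Fin (N + 1)) :
    ∑ t, Cmat α N j t * y t = triplePairing y
      ((Y + C (C (-cexp (α * I) ^ 2))) ^ (N - j) * C (X + C (cexp (α * I))) ^ (j : ℕ)) := by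
  rw [triplePairing_apply]
  refine sum_congr rfl fun t _ => ?_
  rw [coeff_coeff_Y_add_CC_pow_mul, mul_comm, Cmat]
  split_ifs with h
  · ring
  · rcases not_and_or.1 h with h | h <;> simp [Nat.choose_eq_zero_of_lt (not_le.1 h)]

lemma tensorPowMulVec_comp_tripleOf (α : ℝ) (y : Triple N → ℂ) (J : Fin N → Fin 2) :
    tensorPowMulVec (Amat α) (fun L => y (tripleOf L)) J = triplePairing y
      ((Y + C (C (cexp (α * I))) * C X) ^ (N - fiberCard J 1) *
        C (X + C (cexp (α * I))) ^ fiberCard J 1) := by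
  set z := cexp (α * I)
  let mono : Fin 3 → ℂ[X][Y] := ![Y, C X, 1]
  have hrow : ∀ i, ![Y + C (C z) * C X, C (X + C z)] i = ∑ ℓ, C (C (Amat α i ℓ)) * mono ℓ := by
    intro i
    fin_cases i <;> simp [Amat, Fin.sum_univ_three, mono, z]
  have hJ0 : fiberCard J 0 = N - fiberCard J 1 := by
    have := sum_fiberCard J
    simp only [Fin.sum_univ_two, Fintype.card_fin] at this
    omega
  have hpoly : (Y + C (C z) * C X) ^ (N - fiberCard J 1) * C (X + C z) ^ fiberCard J 1
      = ∑ L : Fin N → Fin 3, C (C (∏ p, Amat α (J p) (L p))) *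
          (C (X ^ (tripleOf L).1.2.1) * Y ^ (tripleOf L).1.1) := by
    calc _ = ∏ p, ![Y + C (C z) * C X, C (X + C z)] (J p) := by
          rw [prod_comp_eq_prod_pow_fiberCard, Fin.prod_univ_two, hJ0]; rfl
      _ = ∑ L : Fin N → Fin 3, ∏ p, C (C (Amat α (J p) (L p))) * mono (L p) := by
          simp only [hrow, Finset.prod_univ_sum]
          rfl
      _ = _ := by
          refine sum_congr rfl fun L _ => ?_
          rw [prod_mul_distrib, ← map_prod, ← map_prod, prod_comp_eq_prod_pow_fiberCard L mono,
            Fin.prod_univ_three]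
          simp only [mono, tripleOf, Matrix.cons_val, one_pow, mul_one, ← map_pow]
          ring
  rw [hpoly, map_sum]
  refine sum_congr rfl fun L _ => ?_
  have hsmul : ∀ (a : ℂ) (P : ℂ[X][Y]), C (C a) * P = a • P := fun a P =>
    (Algebra.smul_def a P).symm
  rw [hsmul, map_smul, triplePairing_monomial, smul_eq_mul, mul_comm]

lemma forall_sum_cmat_mul_eq_zero_iff (α : ℝ) (y : Triple N → ℂ) :
    (∀ j : Fin (N + 1), ∑ t, Cmat α N j t * y t = 0) ↔
      ∀ J : Fin N → Fin 2, tensorPowMulVec (Amat α) (fun L => y (tripleOf L)) J = 0 := by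
  set z := cexp (α * I)
  have hrows : (Y + C (C (-z ^ 2))) + z • C (X + C z) = Y + C (C z) * C X := by
    rw [Algebra.smul_def]
    simp only [Polynomial.algebraMap_apply, Algebra.algebraMap_self, RingHom.id_apply, map_add,
      map_neg, map_pow]
    ring
  calc (∀ j : Fin (N + 1), ∑ t, Cmat α N j t * y t = 0)
      ↔ ∀ j ≤ N, triplePairing y ((Y + C (C (-z ^ 2))) ^ (N - j) * C (X + C z) ^ j) = 0 := by
        simp only [sum_cmat_mul_eq_triplePairing]
        exact ⟨fun h j hj => h ⟨j, Nat.lt_succ_of_le hj⟩, fun h j => h j (Nat.le_of_lt_succ j.2)⟩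
    _ ↔ ∀ j ≤ N, triplePairing y ((Y + C (C z) * C X) ^ (N - j) * C (X + C z) ^ j) = 0 := by
        rw [← hrows, forall_map_add_smul_pow_mul_pow_eq_zero_iff]
    _ ↔ _ := by
        simp only [tensorPowMulVec_comp_tripleOf]
        refine ⟨fun h J => h _ ((fiberCard_le J 1).trans_eq (Fintype.card_fin N)), fun h j hj => ?_⟩
        obtain ⟨J, hJ⟩ := exists_fiberCard_eq (N := N) ![N - j, j] (by simp [hj])
        simpa [hJ] using h J

end Bivariate

theorem nns_iff_reduced_nns_general (α : ℝ) (N : ℕ) :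
    (∃ x : (Fin N → Fin 3) → ℝ,
      (∀ L, 0 ≤ x L) ∧ x ≠ 0 ∧
      ∀ J : Fin N → Fin 2,
        ∑ L : Fin N → Fin 3, (x L : ℂ) * ∏ p : Fin N, Amat α (J p) (L p) = 0) ↔
    (∃ y : Triple N → ℝ,
      (∀ t, 0 ≤ y t) ∧ y ≠ 0 ∧
      ∀ j : Fin (N + 1), ∑ t : Triple N, Cmat α N j t * (y t : ℂ) = 0) := by
  constructor
  · rintro ⟨x, hx0, hx, hsys⟩
    obtain ⟨y, hy0, hy, hysys⟩ := exists_nonneg_solution_comp_tripleOf (Amat α) x hx0 hx hsys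
    exact ⟨y, hy0, hy, (forall_sum_cmat_mul_eq_zero_iff α _).2 hysys⟩
  · rintro ⟨y, hy0, hy, hsys⟩
    exact ⟨y ∘ tripleOf, fun L => hy0 _, fun h => hy (tripleOf_surjective.injective_comp_right h),
      (forall_sum_cmat_mul_eq_zero_iff α _).1 hsys⟩

/-- The full system `A_α^{⊗N} x = 0` has a nontrivial nonnegative solution if
and only if the reduced system `C_{α,N} y = 0` does. -/
theorem nns_iff_reduced_nns (α : ℝ) (N : ℕ) (hN : 1 ≤ N) :
    (∃ x : (Fin N → Fin 3) → ℝ,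
      (∀ L, 0 ≤ x L) ∧ x ≠ 0 ∧
      ∀ J : Fin N → Fin 2,
        ∑ L : Fin N → Fin 3, (x L : ℂ) * ∏ p : Fin N, Amat α (J p) (L p) = 0) ↔
    (∃ y : Triple N → ℝ,
      (∀ t, 0 ≤ y t) ∧ y ≠ 0 ∧
      ∀ j : Fin (N + 1), ∑ t : Triple N, Cmat α N j t * (y t : ℂ) = 0) :=
  nns_iff_reduced_nns_general α N
end

section
/- Let N ≥ 2 be an even integer, let θ ∈ (0, π/(2N)), and set α = π/2 + θ. Suppose y_0, y_1, …, y_{N/2} are nonnegative real numbers satisfying ∑_{k=0}^{N/2−1} (−1)^k · binom(N,k) · 2·cos((N−2k)α) · y_k + (−1)^{N/2} · binom(N, N/2) · y_{N/2} = 0. Then y_k = 0 for all k = 0, 1, …, N/2. -/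
open Real Finset

/-- For even `N` and `θ ∈ (0, π/(2N))`, `α = π/2 + θ`, nonnegative reals
`y_0, …, y_{N/2}` satisfying the first-row equation of the reduced system must
all vanish. -/
theorem even_first_row_forces_zero (N : ℕ) (hN : 2 ≤ N) (hNeven : Even N)
    (θ : ℝ) (hθ : θ ∈ Set.Ioo 0 (π / (2 * N))) (α : ℝ) (hα : α = π / 2 + θ)
    (y : ℕ → ℝ) (hy0 : ∀ k ≤ N / 2, 0 ≤ y k)
    (heq : ∑ k ∈ Finset.range (N / 2),
        (-1 : ℝ) ^ k * (N.choose k) * 2 * Real.cos (((N - 2 * k : ℕ) : ℝ) * α) * y k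
      + (-1 : ℝ) ^ (N / 2) * (N.choose (N / 2)) * y (N / 2) = 0) :
    ∀ k ≤ N / 2, y k = 0 := by
  obtain ⟨hθ0, hθπ⟩ := hθ
  have hπ := Real.pi_pos
  have hNR : (0:ℝ) < N := by exact_mod_cast (by omega : 0 < N)
  -- key pointwise identity
  have hkey : ∀ k ≤ N / 2, (-1:ℝ)^k * Real.cos (((N - 2*k : ℕ):ℝ) * α)
      = (-1:ℝ)^(N/2) * Real.cos (((N - 2*k : ℕ):ℝ) * θ) := by
    intro k hk
    obtain ⟨m, hm⟩ : ∃ m, N/2 = k + m := ⟨N/2 - k, by omega⟩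
    obtain ⟨t, ht⟩ := hNeven
    have hNm : N - 2*k = 2*m := by omega
    have hcosm : Real.cos ((m:ℝ)*π) = (-1:ℝ)^m := by
      simpa using Real.cos_nat_mul_pi_sub 0 m
    rw [hNm, hα, hm]
    push_cast
    have h1 : (2*(m:ℝ)) * (π/2 + θ) = (m:ℝ)*π + (2*(m:ℝ))*θ := by ring
    rw [h1, Real.cos_add, Real.sin_nat_mul_pi, hcosm]
    ring
  -- positivity of cosines
  have hcos : ∀ k ≤ N / 2, 0 < Real.cos (((N - 2*k : ℕ):ℝ) * θ) := by
    intro k hk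
    apply Real.cos_pos_of_mem_Ioo
    constructor
    · have : (0:ℝ) ≤ ((N - 2*k : ℕ):ℝ) * θ := by positivity
      linarith
    · have h1 : ((N - 2*k : ℕ):ℝ) ≤ (N:ℝ) := by exact_mod_cast (by omega : N - 2*k ≤ N)
      have h2 : ((N - 2*k : ℕ):ℝ) * θ ≤ (N:ℝ) * θ := by nlinarith
      have h3 : (N:ℝ) * θ < (N:ℝ) * (π / (2*N)) := by nlinarith
      have h4 : (N:ℝ) * (π / (2*N)) = π/2 := by field_simp
      linarith
  -- rewrite the equation
  have heq2 : (-1:ℝ)^(N/2) *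
      (∑ k ∈ Finset.range (N/2),
        ((N.choose k):ℝ) * 2 * Real.cos (((N - 2*k : ℕ):ℝ) * θ) * y k
      + ((N.choose (N/2)):ℝ) * y (N/2)) = 0 := by
    rw [← heq, mul_add, Finset.mul_sum]
    congr 1
    · apply Finset.sum_congr rfl
      intro k hk
      have h := hkey k (le_of_lt (Finset.mem_range.mp hk))
      linear_combination (-((N.choose k):ℝ) * 2 * y k) * h
    · ring
  have hS : ∑ k ∈ Finset.range (N/2),
        ((N.choose k):ℝ) * 2 * Real.cos (((N - 2*k : ℕ):ℝ) * θ) * y k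
      + ((N.choose (N/2)):ℝ) * y (N/2) = 0 := by
    rcases mul_eq_zero.mp heq2 with h | h
    · exact absurd h (pow_ne_zero _ (by norm_num))
    · exact h
  have hterm : ∀ k ∈ Finset.range (N/2),
      0 ≤ ((N.choose k):ℝ) * 2 * Real.cos (((N - 2*k : ℕ):ℝ) * θ) * y k := by
    intro k hk
    have hk' := le_of_lt (Finset.mem_range.mp hk)
    have := hcos k hk'
    have := hy0 k hk'
    positivity
  have hlast : 0 ≤ ((N.choose (N/2)):ℝ) * y (N/2) := by
    have := hy0 (N/2) le_rfl
    positivity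
  have hsum0 : ∑ k ∈ Finset.range (N/2),
      ((N.choose k):ℝ) * 2 * Real.cos (((N - 2*k : ℕ):ℝ) * θ) * y k = 0 := by
    have hsn := Finset.sum_nonneg hterm
    linarith
  have hlast0 : ((N.choose (N/2)):ℝ) * y (N/2) = 0 := by linarith [Finset.sum_nonneg hterm]
  intro k hk
  rcases lt_or_eq_of_le hk with hk' | hk'
  · have := (Finset.sum_eq_zero_iff_of_nonneg hterm).mp hsum0 k (Finset.mem_range.mpr hk')
    have hC : (0:ℝ) < ((N.choose k):ℝ) * 2 * Real.cos (((N - 2*k : ℕ):ℝ) * θ) := by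
      have hc := hcos k hk
      have hch : 0 < N.choose k := Nat.choose_pos (by omega)
      have : (0:ℝ) < ((N.choose k):ℝ) := by exact_mod_cast hch
      positivity
    exact (mul_eq_zero.mp this).resolve_left (ne_of_gt hC)
  · rw [hk']
    have hch : 0 < N.choose (N/2) := Nat.choose_pos (by omega)
    have hC : (0:ℝ) < ((N.choose (N/2)):ℝ) := by exact_mod_cast hch
    exact (mul_eq_zero.mp hlast0).resolve_left (ne_of_gt hC)
end

section
/- Let N ≥ 1 be an odd integer, let θ ∈ (0, π/(2N)), set α = π/2 + θ and z = e^{iα}. Suppose y_0, y_1, …, y_{(N−1)/2} are nonnegative real numbers satisfying ∑_{k=0}^{(N−1)/2} (−1)^k · binom(N,k) · (z^{2k} − z^{2N−2k}) · y_k = 0. Then y_k = 0 for all k = 0, 1, …, (N−1)/2. -/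
open Real Complex Finset

/-- The key trigonometric identity: for `N = 2M+1`, `k ≤ M`, `α = π/2 + θ`,
`(-1)^k (cos(2kα) − cos((2N−2k)α)) = 2 cos((N−2k)θ) cos(Nθ)`. -/
lemma odd_first_row_trig (N M k : ℕ) (hNM : N = 2 * M + 1) (hk : k ≤ M) (θ : ℝ) :
    (-1 : ℝ) ^ k *
      (Real.cos (((2 * k : ℕ) : ℝ) * (π / 2 + θ)) -
        Real.cos (((2 * N - 2 * k : ℕ) : ℝ) * (π / 2 + θ))) =
    2 * Real.cos (((N : ℝ) - 2 * k) * θ) * Real.cos (N * θ) := by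
  have h1 : ((2 * k : ℕ) : ℝ) * (π / 2 + θ) = 2 * (k : ℝ) * θ + (k : ℕ) * π := by
    push_cast; ring
  have h2 : ((2 * N - 2 * k : ℕ) : ℝ) * (π / 2 + θ)
      = 2 * ((N : ℝ) - k) * θ + ((N - k : ℕ) : ℝ) * π := by
    have hkN : k ≤ N := by omega
    push_cast [Nat.cast_sub (by omega : 2 * k ≤ 2 * N), Nat.cast_sub hkN]
    ring
  rw [h1, h2, Real.cos_add_nat_mul_pi, Real.cos_add_nat_mul_pi]
  have hNk : (-1 : ℝ) ^ (N - k) = -(-1 : ℝ) ^ k := by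
    have h : N - k = 2 * (M - k) + (k + 1) := by omega
    rw [h, pow_add, pow_mul]
    simp [pow_succ]
  rw [hNk]
  have hsq : (-1 : ℝ) ^ k * (-1 : ℝ) ^ k = 1 := by
    rw [← pow_add, ← two_mul, pow_mul]
    norm_num
  have key : (-1 : ℝ) ^ k * ((-1:ℝ)^k * Real.cos (2 * (k:ℝ) * θ) -
      (-(-1:ℝ)^k) * Real.cos (2 * ((N:ℝ) - k) * θ))
      = Real.cos (2 * (k:ℝ) * θ) + Real.cos (2 * ((N:ℝ) - k) * θ) := by
    have expand : (-1 : ℝ) ^ k * ((-1:ℝ)^k * Real.cos (2 * (k:ℝ) * θ) -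
        (-(-1:ℝ)^k) * Real.cos (2 * ((N:ℝ) - k) * θ))
        = ((-1 : ℝ) ^ k * (-1:ℝ)^k) * Real.cos (2 * (k:ℝ) * θ)
          + ((-1 : ℝ) ^ k * (-1:ℝ)^k) * Real.cos (2 * ((N:ℝ) - k) * θ) := by ring
    rw [expand, hsq]; ring
  rw [key, Real.cos_add_cos]
  have e1 : (2 * (k:ℝ) * θ + 2 * ((N:ℝ) - k) * θ) / 2 = N * θ := by ring
  have e2 : (2 * (k:ℝ) * θ - 2 * ((N:ℝ) - k) * θ) / 2 = -(((N:ℝ) - 2 * k) * θ) := by ring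
  rw [e1, e2, Real.cos_neg]
  ring

/-- For odd `N` and `θ ∈ (0, π/(2N))`, `α = π/2 + θ`, `z = e^{iα}`, nonnegative
reals `y_0, …, y_{(N-1)/2}` satisfying the first-row equation of the reduced
system must all vanish. -/
theorem odd_first_row_forces_zero (N : ℕ) (hN : 1 ≤ N) (hNodd : Odd N)
    (θ : ℝ) (hθ : θ ∈ Set.Ioo 0 (π / (2 * N))) (α : ℝ) (hα : α = π / 2 + θ)
    (y : ℕ → ℝ) (hy0 : ∀ k ≤ (N - 1) / 2, 0 ≤ y k)
    (heq : ∑ k ∈ Finset.range ((N - 1) / 2 + 1),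
        (-1 : ℂ) ^ k * (N.choose k) *
          (Complex.exp (α * Complex.I) ^ (2 * k) -
           Complex.exp (α * Complex.I) ^ (2 * N - 2 * k)) * (y k : ℂ) = 0) :
    ∀ k ≤ (N - 1) / 2, y k = 0 := by
  obtain ⟨M, hNM⟩ := hNodd
  have hNM' : N = 2 * M + 1 := by omega
  have hM : (N - 1) / 2 = M := by omega
  have hθ0 : 0 < θ := hθ.1
  have hθN : (N : ℝ) * θ < π / 2 := by
    have hNpos : (0 : ℝ) < N := by exact_mod_cast hN
    have h2 := hθ.2
    rw [div_mul_eq_div_div] at h2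
    calc (N : ℝ) * θ < N * (π / 2 / N) := mul_lt_mul_of_pos_left h2 hNpos
      _ = π / 2 := by field_simp
  have hcosN : 0 < Real.cos ((N : ℝ) * θ) := by
    apply Real.cos_pos_of_mem_Ioo
    constructor
    · have : (0:ℝ) < (N:ℝ) * θ := by positivity
      linarith [Real.pi_pos]
    · exact hθN
  -- helper for real parts
  have key : ∀ (r s a b : ℝ),
      ((r : ℂ) * (Complex.exp ((a:ℂ) * Complex.I) - Complex.exp ((b:ℂ) * Complex.I))
        * (s : ℂ)).re = r * (Real.cos a - Real.cos b) * s := by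
    intro r s a b
    simp [Complex.mul_re, Complex.sub_re, Complex.sub_im, Complex.exp_ofReal_mul_I_re]
  -- take the real part of the equation
  have hre : ∑ k ∈ Finset.range (M + 1),
      (2 * (N.choose k : ℝ) * Real.cos (((N : ℝ) - 2 * k) * θ) * Real.cos ((N:ℝ) * θ))
        * y k = 0 := by
    have h := congrArg Complex.re heq
    rw [Complex.re_sum, hM, Complex.zero_re] at h
    rw [← h]
    apply Finset.sum_congr rfl
    intro k hk
    rw [Finset.mem_range] at hk
    have hkM : k ≤ M := by omega
    have hexp : ∀ n : ℕ, Complex.exp ((α:ℂ) * Complex.I) ^ n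
        = Complex.exp ((((n : ℝ) * α : ℝ) : ℂ) * Complex.I) := by
      intro n
      rw [← Complex.exp_nat_mul]
      push_cast
      ring_nf
    have hc : (-1 : ℂ) ^ k * (N.choose k : ℂ)
        = ((((-1:ℝ)^k * (N.choose k : ℝ) : ℝ)) : ℂ) := by push_cast; ring
    rw [hexp (2 * k), hexp (2 * N - 2 * k), hc, key]
    rw [hα]
    rw [show (-1:ℝ)^k * (N.choose k : ℝ) *
        (Real.cos (((2*k : ℕ):ℝ) * (π/2 + θ)) - Real.cos (((2*N-2*k : ℕ):ℝ) * (π/2 + θ)))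
        * y k
        = (N.choose k : ℝ) * ((-1:ℝ)^k *
          (Real.cos (((2*k : ℕ):ℝ) * (π/2 + θ)) - Real.cos (((2*N-2*k : ℕ):ℝ) * (π/2 + θ))))
          * y k by ring]
    rw [odd_first_row_trig N M k hNM' hkM θ]
    ring
  -- each summand is nonnegative with positive coefficient
  intro k hk
  rw [hM] at hk hy0
  have hmem : k ∈ Finset.range (M + 1) := Finset.mem_range.mpr (by omega)
  have hcoef : ∀ j ∈ Finset.range (M + 1),
      0 < 2 * (N.choose j : ℝ) * Real.cos (((N : ℝ) - 2 * j) * θ) * Real.cos ((N:ℝ) * θ) := by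
    intro j hj
    rw [Finset.mem_range] at hj
    have hjM : j ≤ M := by omega
    have hchoose : 0 < (N.choose j : ℝ) := by
      exact_mod_cast Nat.choose_pos (by omega : j ≤ N)
    have hcosj : 0 < Real.cos (((N : ℝ) - 2 * j) * θ) := by
      apply Real.cos_pos_of_mem_Ioo
      have h1 : (1 : ℝ) ≤ (N : ℝ) - 2 * j := by
        have : 2 * j + 1 ≤ N := by omega
        have := (Nat.cast_le (α := ℝ)).mpr this
        push_cast at this ⊢
        linarith
      have h2 : (N : ℝ) - 2 * j ≤ N := by
        have : (0:ℝ) ≤ 2 * j := by positivity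
        linarith
      constructor
      · have : (0:ℝ) < ((N : ℝ) - 2 * j) * θ := by nlinarith
        linarith [Real.pi_pos]
      · calc ((N : ℝ) - 2 * j) * θ ≤ (N:ℝ) * θ := by nlinarith
          _ < π / 2 := hθN
    positivity
  have hnonneg : ∀ j ∈ Finset.range (M + 1),
      0 ≤ (2 * (N.choose j : ℝ) * Real.cos (((N : ℝ) - 2 * j) * θ) * Real.cos ((N:ℝ) * θ))
        * y j := by
    intro j hj
    have := hcoef j hj
    have hyj := hy0 j (by rw [Finset.mem_range] at hj; omega)
    positivity
  have hzero := (Finset.sum_eq_zero_iff_of_nonneg hnonneg).mp hre k hmem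
  have hck := hcoef k hmem
  by_contra hy
  have : 0 < y k := lt_of_le_of_ne (hy0 k hk) (Ne.symm hy)
  nlinarith
end
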